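/- For every positive integer n, all complex numbers x, z with x ≠ 0 and z ≠ 0, and every complex number y, one has Z_ASM(n,x,y,z) = x^{n(n−1)/2} z^{n−1} Z_ASM(n, 1/x, y/x, 1/z). -/

import Mathlib

/-!
Reversing the order of the columns, `A ↦ A'`, is an involution of `ASM(n)` that preserves `μ`.
Since every row sums to `1`, `ν(A) + ν(A')` is the number of row pairs `i < i'` plus
`∑_j ∑_{i<i'} A_{ij} A_{i'j}`; as a column `v` sums to `1` and `v_i² = v_i + 2[v_i = -1]`, the inner
sum is minus the number of `-1`s in the column, so `ν(A) + ν(A') + μ(A) = n(n-1)/2`. A `-1` in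
the first row would start an alternating column, whose sum is then `-1` or `0`; hence the first
row is a unit vector and `ρ(A) + ρ(A') = n - 1`. Reindexing the sum by `A ↦ A'` gives the identity.
-/

open Finset Matrix

/-- An n×n alternating sign matrix: entries in {-1,0,1}, row and column sums 1,
and nonzero entries alternate in sign along each row and each column. -/
def IsASM (n : ℕ) (A : Matrix (Fin n) (Fin n) ℤ) : Prop :=
  (∀ i j, A i j = -1 ∨ A i j = 0 ∨ A i j = 1) ∧
  (∀ i, ∑ j, A i j = 1) ∧
  (∀ j, ∑ i, A i j = 1) ∧
  (∀ (i j₁ j₂ : Fin n), j₁ < j₂ → A i j₁ ≠ 0 → A i j₂ ≠ 0 →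
    (∀ j, j₁ < j → j < j₂ → A i j = 0) → A i j₂ = -A i j₁) ∧
  (∀ (j i₁ i₂ : Fin n), i₁ < i₂ → A i₁ j ≠ 0 → A i₂ j ≠ 0 →
    (∀ i, i₁ < i → i < i₂ → A i j = 0) → A i₂ j = -A i₁ j)

/-- ν(A) = ∑_{1≤i<i'≤n, 1≤j'≤j≤n} A_{i j} A_{i' j'}. -/
def nuASM {n : ℕ} (A : Matrix (Fin n) (Fin n) ℤ) : ℤ :=
  ∑ i : Fin n, ∑ i' : Fin n, ∑ j : Fin n, ∑ j' : Fin n,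
    if i < i' ∧ j' ≤ j then A i j * A i' j' else 0

/-- μ(A) = number of entries of A equal to -1. -/
def muASM {n : ℕ} (A : Matrix (Fin n) (Fin n) ℤ) : ℕ :=
  (Finset.univ.filter fun p : Fin n × Fin n => A p.1 p.2 = -1).card

/-- ρ(A) = number of 0's to the left of the (unique) 1 in the first row of A. -/
def rhoASM {n : ℕ} (A : Matrix (Fin n) (Fin n) ℤ) : ℕ :=
  haveI : ∀ (i j : Fin n), Decidable (∃ j' : Fin n, j < j' ∧ A i j' = 1) := fun _ _ => inferInstance
  (Finset.univ.filter fun j : Fin n =>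
    ∃ i : Fin n, (i : ℕ) = 0 ∧ A i j = 0 ∧ ∃ j' : Fin n, j < j' ∧ A i j' = 1).card

/-- Z_ASM(n,x,y,z) = ∑_{A ∈ ASM(n)} x^{ν(A)} y^{μ(A)} z^{ρ(A)}. -/
noncomputable def ZASM (n : ℕ) (x y z : ℂ) : ℂ :=
  ∑ᶠ A ∈ {A : Matrix (Fin n) (Fin n) ℤ | IsASM n A},
    x ^ nuASM A * y ^ muASM A * z ^ rhoASM A

def SignAlternating {n : ℕ} (f : Fin n → ℤ) : Prop :=
  ∀ i₁ i₂, i₁ < i₂ → f i₁ ≠ 0 → f i₂ ≠ 0 → (∀ i, i₁ < i → i < i₂ → f i = 0) → f i₂ = -f i₁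

namespace SignAlternating

variable {n : ℕ}

lemma comp_rev {f : Fin n → ℤ} (hf : SignAlternating f) : SignAlternating (f ∘ Fin.rev) := by
  intro i₁ i₂ h12 h1 h2 hzero
  have := hf i₂.rev i₁.rev (Fin.rev_lt_rev.mpr h12) h2 h1 fun i hi₂ hi₁ => by
    simpa using hzero i.rev (Fin.lt_rev_iff.mpr hi₁) (Fin.rev_lt_iff.mpr hi₂)
  simp only [Function.comp_apply, this, neg_neg]

lemma comp_castSucc {f : Fin (n + 1) → ℤ} (hf : SignAlternating f) :
    SignAlternating (f ∘ Fin.castSucc) := fun i₁ i₂ h12 h1 h2 hzero =>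
  hf _ _ (Fin.castSucc_lt_castSucc_iff.mpr h12) h1 h2 fun i hi₁ hi₂ => by
    obtain ⟨i, rfl⟩ := Fin.exists_castSucc_eq.mpr (hi₂.trans_le (Fin.le_last _)).ne
    exact hzero i (Fin.castSucc_lt_castSucc_iff.mp hi₁) (Fin.castSucc_lt_castSucc_iff.mp hi₂)

lemma exists_two_mul_sum_eq {f : Fin (n + 1) → ℤ} (hf : SignAlternating f) (h0 : f 0 ≠ 0) :
    ∃ l, f l ≠ 0 ∧ (∀ i, l < i → f i = 0) ∧ 2 * ∑ i, f i = f 0 + f l := by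
  induction n with
  | zero =>
    exact ⟨0, h0, fun i hi => absurd hi (by simp [Fin.subsingleton_one.elim i 0]), by simp [two_mul]⟩
  | succ n ih =>
    obtain ⟨l, hl, hafter, hsum⟩ := ih hf.comp_castSucc h0
    simp only [Function.comp_apply, Fin.castSucc_zero] at hl hafter hsum
    rw [Fin.sum_univ_castSucc]
    by_cases hlast : f (Fin.last _) = 0
    · refine ⟨l.castSucc, hl, fun i hi => ?_, by rw [hlast]; linarith⟩
      induction i using Fin.lastCases with
      | last => exact hlast
      | cast i => exact hafter i (Fin.castSucc_lt_castSucc_iff.mp hi)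
    · have hflip := hf l.castSucc (Fin.last _) (Fin.castSucc_lt_last l) hl hlast fun i hi₁ hi₂ => by
        obtain ⟨i, rfl⟩ := Fin.exists_castSucc_eq.mpr hi₂.ne
        exact hafter i (Fin.castSucc_lt_castSucc_iff.mp hi₁)
      refine ⟨Fin.last _, hlast, fun i hi => absurd hi (Fin.le_last i).not_gt, ?_⟩
      linarith

end SignAlternating

section OrderedSums

variable {ι R : Type*} [Fintype ι] [LinearOrder ι]

lemma sum_sum_ite_le_add_sum_sum_ite_ge [Semiring R] (r s : ι → R) :
    ((∑ j, ∑ j', if j' ≤ j then r j * s j' else 0) +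
      ∑ j, ∑ j', if j ≤ j' then r j * s j' else 0) =
      (∑ j, r j) * (∑ j, s j) + ∑ j, r j * s j := by
  have key : ∀ j j', ((if j' ≤ j then r j * s j' else 0) + if j ≤ j' then r j * s j' else 0) =
      r j * s j' + if j = j' then r j * s j' else 0 := by
    intro j j'
    rcases lt_trichotomy j j' with h | rfl | h
    · simp [h.ne, h.le, h.not_ge]
    · simp
    · simp [h.ne', h.le, h.not_ge]
  calc _ = ∑ j, ∑ j', (r j * s j' + if j = j' then r j * s j' else 0) := by
        simp only [← sum_add_distrib, key]
    _ = _ := by simp [sum_add_distrib, sum_mul_sum]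

lemma sq_sum_eq_sum_sq_add_two_mul_sum_lt [CommSemiring R] (v : ι → R) :
    (∑ i, v i) ^ 2 = ∑ i, v i ^ 2 + 2 * ∑ i, ∑ i', if i < i' then v i * v i' else 0 := by
  have key : ∀ i i', v i * v i' = ((if i < i' then v i * v i' else 0) +
      (if i' < i then v i' * v i else 0)) + if i = i' then v i * v i' else 0 := by
    intro i i'
    rcases lt_trichotomy i i' with h | rfl | h
    · simp [h, h.ne, h.not_gt]
    · simp
    · simp [h, h.ne', h.not_gt, mul_comm]
  rw [sq, sum_mul_sum, sum_congr rfl fun i _ => sum_congr rfl fun i' _ => key i i']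
  simp only [sum_add_distrib]
  rw [sum_comm (f := fun i i' => if i' < i then v i' * v i else 0)]
  simp only [sum_ite_eq, mem_univ, if_true, sq]
  ring

lemma sum_sum_ite_lt_mul_eq_neg_card (v : ι → ℤ) (hv : ∀ i, v i = -1 ∨ v i = 0 ∨ v i = 1)
    (hsum : ∑ i, v i = 1) :
    ∑ i, ∑ i', (if i < i' then v i * v i' else 0) = -(#{i | v i = -1} : ℤ) := by
  have hsq : ∀ i, v i ^ 2 = v i + 2 * if v i = -1 then 1 else 0 := by
    intro i
    rcases hv i with h | h | h <;> simp [h]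
  have := sq_sum_eq_sum_sq_add_two_mul_sum_lt v
  simp only [hsq, sum_add_distrib, ← mul_sum, hsum] at this
  rw [natCast_card_filter]
  linarith

lemma sum_sum_ite_lt_one (n : ℕ) :
    ∑ i : Fin n, ∑ i' : Fin n, (if i < i' then (1 : ℤ) else 0) = ((n * (n - 1) / 2 : ℕ) : ℤ) := by
  rw [sum_comm, ← sum_range_id, ← Fin.sum_univ_eq_sum_range]
  push_cast
  refine sum_congr rfl fun i' _ => ?_
  simp [Finset.filter_gt_eq_Iio]

end OrderedSums

lemma exists_eq_single_of_sum_eq_one {ι : Type*} [Fintype ι] [DecidableEq ι] {f : ι → ℤ}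
    (hf : ∀ j, f j = 0 ∨ f j = 1) (hsum : ∑ j, f j = 1) : ∃ j₀, f = Pi.single j₀ 1 := by
  have hcard : #{j | f j = 1} = 1 := by
    have : ∑ j, f j = #{j | f j = 1} := by
      rw [natCast_card_filter]
      exact sum_congr rfl fun j _ => by rcases hf j with h | h <;> simp [h]
    omega
  obtain ⟨j₀, hj₀⟩ := card_eq_one.mp hcard
  refine ⟨j₀, funext fun j => ?_⟩
  have hmem : f j = 1 ↔ j = j₀ := by simpa using congrArg (j ∈ ·) hj₀
  rcases hf j with h | h <;> by_cases hj : j = j₀ <;> simp_all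

def revCols {ι α : Type*} {n : ℕ} (A : Matrix ι (Fin n) α) : Matrix ι (Fin n) α :=
  A.submatrix id Fin.rev

@[simp]
lemma revCols_apply {ι α : Type*} {n : ℕ} (A : Matrix ι (Fin n) α) (i : ι) (j : Fin n) :
    revCols A i j = A i j.rev := rfl

@[simp]
lemma revCols_revCols {ι α : Type*} {n : ℕ} (A : Matrix ι (Fin n) α) :
    revCols (revCols A) = A := by
  ext i j
  simp

lemma sum_sum_ite_le_rev {n : ℕ} {R : Type*} [Semiring R] (r s : Fin n → R) :
    (∑ j : Fin n, ∑ j' : Fin n, if j' ≤ j then r j.rev * s j'.rev else 0) =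
      ∑ j, ∑ j', if j ≤ j' then r j * s j' else 0 :=
  Fintype.sum_equiv Fin.revPerm _ _ fun _ => Fintype.sum_equiv Fin.revPerm _ _ fun _ => by
    simp [Fin.rev_le_rev]

section Statistics

variable {n : ℕ}

lemma isASM_revCols {A : Matrix (Fin n) (Fin n) ℤ} (hA : IsASM n A) : IsASM n (revCols A) := by
  obtain ⟨hval, hrow, hcol, hralt, hcalt⟩ := hA
  refine ⟨fun i j => hval i j.rev, fun i => ?_, fun j => hcol j.rev,
    fun i => SignAlternating.comp_rev (hralt i), fun j => hcalt j.rev⟩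
  simpa [← hrow i] using Fintype.sum_equiv Fin.revPerm _ _ fun _ => rfl

lemma muASM_revCols (A : Matrix (Fin n) (Fin n) ℤ) : muASM (revCols A) = muASM A := by
  unfold muASM
  exact card_equiv ((Equiv.refl _).prodCongr Fin.revPerm) fun _ => by
    simp only [mem_filter, mem_univ, true_and]
    rfl

lemma muASM_eq_sum_card_col (A : Matrix (Fin n) (Fin n) ℤ) :
    muASM A = ∑ j, #{i | A i j = -1} := by
  simp only [muASM, card_filter, Fintype.sum_prod_type]
  exact sum_comm

lemma nuASM_eq_sum_lt (A : Matrix (Fin n) (Fin n) ℤ) :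
    nuASM A = ∑ i, ∑ i', if i < i' then
      ∑ j, ∑ j', (if j' ≤ j then A i j * A i' j' else 0) else 0 := by
  simp only [nuASM, ite_and, ite_sum_zero]

lemma rhoASM_eq_of_first_row {k : ℕ} {A : Matrix (Fin (k + 1)) (Fin (k + 1)) ℤ} {j₀ : Fin (k + 1)}
    (h : A 0 = Pi.single j₀ 1) : rhoASM A = j₀ := by
  rw [rhoASM, ← Fin.card_Iio j₀]
  congr 1
  ext j
  simpa [Fin.val_eq_zero_iff, h, Pi.single_apply] using ne_of_lt

end Statistics

namespace IsASM

variable {n : ℕ} {A : Matrix (Fin n) (Fin n) ℤ}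

lemma row_sum (hA : IsASM n A) (i : Fin n) : ∑ j, A i j = 1 := hA.2.1 i

lemma col_sum (hA : IsASM n A) (j : Fin n) : ∑ i, A i j = 1 := hA.2.2.1 j

lemma col_signAlternating (hA : IsASM n A) (j : Fin n) : SignAlternating fun i => A i j :=
  hA.2.2.2.2 j

lemma first_row_ne_neg_one {k : ℕ} {A : Matrix (Fin (k + 1)) (Fin (k + 1)) ℤ}
    (hA : IsASM (k + 1) A) (j : Fin (k + 1)) : A 0 j ≠ -1 := by
  intro hneg
  obtain ⟨l, -, -, hsum⟩ := (hA.col_signAlternating j).exists_two_mul_sum_eq (by simp [hneg])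
  rw [hA.col_sum j, hneg] at hsum
  rcases hA.1 l j with h | h | h <;> omega

lemma exists_first_row_eq_single {k : ℕ} {A : Matrix (Fin (k + 1)) (Fin (k + 1)) ℤ}
    (hA : IsASM (k + 1) A) : ∃ j₀, A 0 = Pi.single j₀ 1 :=
  exists_eq_single_of_sum_eq_one
    (fun j => (hA.1 0 j).resolve_left (hA.first_row_ne_neg_one j)) (hA.row_sum 0)

lemma rhoASM_add_rhoASM_revCols (hA : IsASM n A) : rhoASM A + rhoASM (revCols A) = n - 1 := by
  cases n with
  | zero => simp [rhoASM]
  | succ k =>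
    obtain ⟨j₀, h⟩ := hA.exists_first_row_eq_single
    have h' : revCols A 0 = Pi.single j₀.rev 1 := by
      ext j
      simp [h, Pi.single_apply, Fin.rev_eq_iff]
    rw [rhoASM_eq_of_first_row h, rhoASM_eq_of_first_row h', Fin.val_rev]
    omega

lemma nuASM_add_nuASM_revCols (hA : IsASM n A) :
    nuASM A + nuASM (revCols A) + muASM A = ((n * (n - 1) / 2 : ℕ) : ℤ) := by
  have hrows : ∀ i i', ((∑ j, ∑ j', if j' ≤ j then A i j * A i' j' else 0) +
      ∑ j, ∑ j', if j' ≤ j then revCols A i j * revCols A i' j' else 0) =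
      1 + ∑ j, A i j * A i' j := by
    intro i i'
    simp only [revCols_apply, sum_sum_ite_le_rev, sum_sum_ite_le_add_sum_sum_ite_ge, hA.row_sum,
      one_mul]
  have hcols : ∑ i, ∑ i', (if i < i' then ∑ j, A i j * A i' j else 0) = -(muASM A : ℤ) := by
    calc _ = ∑ j, ∑ i, ∑ i', if i < i' then A i j * A i' j else 0 := by
          simp only [ite_sum_zero]
          exact (sum_congr rfl fun i _ => sum_comm).trans sum_comm
      _ = _ := by
          rw [muASM_eq_sum_card_col]
          push_cast
          rw [← sum_neg_distrib]
          exact sum_congr rfl fun j _ =>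
            sum_sum_ite_lt_mul_eq_neg_card _ (fun i => hA.1 i j) (hA.col_sum j)
  calc nuASM A + nuASM (revCols A) + muASM A
      = (∑ i, ∑ i', ((if i < i' then 1 else 0) + if i < i' then ∑ j, A i j * A i' j else 0))
        + muASM A := by
        rw [nuASM_eq_sum_lt, nuASM_eq_sum_lt, ← sum_add_distrib]
        congr 1
        refine sum_congr rfl fun i _ => ?_
        rw [← sum_add_distrib]
        refine sum_congr rfl fun i' _ => ?_
        split_ifs
        exacts [hrows i i', by simp]
    _ = _ := by
        simp only [sum_add_distrib, hcols, sum_sum_ite_lt_one]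
        ring

end IsASM

lemma zpow_mul_pow_mul_pow_eq_of_add_eq {K : Type*} [Field K] {x z : K} (hx : x ≠ 0)
    (hz : z ≠ 0) (y : K) {a a' : ℤ} {b c c' N m : ℕ} (ha : a + a' + b = N) (hc : c + c' = m) :
    x ^ a * y ^ b * z ^ c = x ^ N * z ^ m * ((1 / x) ^ a' * (y / x) ^ b * (1 / z) ^ c') := by
  have hxN : x ^ N * (1 / x) ^ a' = x ^ a * x ^ b := by
    rw [one_div, _root_.inv_zpow', ← zpow_natCast, ← zpow_natCast x b, ← zpow_add₀ hx,
      ← zpow_add₀ hx]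
    congr 1
    omega
  rw [← hc, pow_add, div_pow, _root_.one_div_pow]
  calc x ^ a * y ^ b * z ^ c
      = (x ^ N * (1 / x) ^ a') * (y ^ b / x ^ b) * z ^ c * (z ^ c' * (1 / z ^ c')) := by
        rw [hxN, mul_one_div_cancel (pow_ne_zero _ hz), mul_one, mul_assoc (x ^ a) (x ^ b),
          mul_div_cancel₀ _ (pow_ne_zero _ hx)]
    _ = _ := by ring

theorem ZASM_symmetry_general (n : ℕ) (x y z : ℂ) (hx : x ≠ 0) (hz : z ≠ 0) :
    ZASM n x y z =
      x ^ (n * (n - 1) / 2) * z ^ (n - 1) * ZASM n (1 / x) (y / x) (1 / z) := by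
  rw [ZASM, ZASM, mul_finsum_mem]
  have hbij : Set.BijOn revCols {A | IsASM n A} {A | IsASM n A} :=
    Set.InvOn.bijOn ⟨fun A _ => revCols_revCols A, fun A _ => revCols_revCols A⟩
      (fun _ => isASM_revCols) (fun _ => isASM_revCols)
  refine finsum_mem_eq_of_bijOn revCols hbij fun A hA => ?_
  rw [muASM_revCols]
  exact zpow_mul_pow_mul_pow_eq_of_add_eq hx hz y (IsASM.nuASM_add_nuASM_revCols hA)
    (IsASM.rhoASM_add_rhoASM_revCols hA)

/-- Z_ASM(n,x,y,z) = x^{n(n−1)/2} z^{n−1} Z_ASM(n,1/x,y/x,1/z) for x, z ≠ 0. -/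
theorem ZASM_symmetry (n : ℕ) (hn : 0 < n) (x y z : ℂ) (hx : x ≠ 0) (hz : z ≠ 0) :
    ZASM n x y z =
      x ^ (n * (n - 1) / 2) * z ^ (n - 1) * ZASM n (1 / x) (y / x) (1 / z) :=
  ZASM_symmetry_general n x y z hx hz
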